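/- arXiv:2204.07720 — 3 statements merged into one kernel-verified Lean document; each statement's English description precedes it below -/
import Mathlib

section
/- Let G be a finite simple graph with m > 0 edges, and let S and S* be finite sets of vertices of G with CM(S) > 0. If CM(S) ≥ CM(S ∪ S*), then DM(S) ≥ DM(S ∪ S*). (In other words, if the classic modularity does not exhibit the free-rider effect when merging S with S*, then neither does the density modularity.) -/
open Finset

/-- Number of edges of `G` with both endpoints in `C`. -/
noncomputable def numEdgesIn {V : Type*} [Fintype V] [DecidableEq V]
    (G : SimpleGraph V) [DecidableRel G.Adj] (C : Finset V) : ℕ :=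
  (G.edgeFinset.filter fun e => ∀ v ∈ e, v ∈ C).card

/-- Sum over `C` of the degrees taken in `G`. -/
def degSum {V : Type*} [Fintype V] [DecidableEq V]
    (G : SimpleGraph V) [DecidableRel G.Adj] (C : Finset V) : ℕ :=
  ∑ v ∈ C, G.degree v

/-- Classic modularity. -/
noncomputable def CM {V : Type*} [Fintype V] [DecidableEq V]
    (G : SimpleGraph V) [DecidableRel G.Adj] (C : Finset V) : ℝ :=
  (1 / (2 * (G.edgeFinset.card : ℝ))) *
    (2 * (numEdgesIn G C : ℝ) -
      (degSum G C : ℝ) ^ 2 / (2 * (G.edgeFinset.card : ℝ)))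

/-- Density modularity. -/
noncomputable def DM {V : Type*} [Fintype V] [DecidableEq V]
    (G : SimpleGraph V) [DecidableRel G.Adj] (C : Finset V) : ℝ :=
  (1 / (2 * (C.card : ℝ))) *
    (2 * (numEdgesIn G C : ℝ) -
      (degSum G C : ℝ) ^ 2 / (2 * (G.edgeFinset.card : ℝ)))

/-!
Both modularities divide the same numerator `2 l_C - d_C² / (2m)` by a positive normaliser:
`2m` for `CM` and `2|C|` for `DM`. So `CM(S ∪ S*) ≤ CM(S)` says that the numerator does not grow,
and `CM(S) > 0` says that it is positive at `S`, which forces `S ≠ ∅`. Dividing the smaller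
numerator by the larger size `|S ∪ S*| ≥ |S|` can then only decrease it further.
-/

section

variable {V : Type*} [Fintype V] [DecidableEq V] (G : SimpleGraph V) [DecidableRel G.Adj]

noncomputable def modularityNumerator (C : Finset V) : ℝ :=
  2 * (numEdgesIn G C : ℝ) - (degSum G C : ℝ) ^ 2 / (2 * (G.edgeFinset.card : ℝ))

theorem CM_eq_div (C : Finset V) :
    CM G C = modularityNumerator G C / (2 * (G.edgeFinset.card : ℝ)) :=
  one_div_mul_eq_div _ _

theorem DM_eq_div (C : Finset V) : DM G C = modularityNumerator G C / (2 * (C.card : ℝ)) :=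
  one_div_mul_eq_div _ _

theorem numEdgesIn_empty : numEdgesIn G ∅ = 0 := by
  simp only [numEdgesIn, card_eq_zero, filter_eq_empty_iff]
  exact fun e _ he => notMem_empty _ (he _ e.out_fst_mem)

theorem modularityNumerator_empty : modularityNumerator G ∅ = 0 := by
  simp [modularityNumerator, numEdgesIn_empty, degSum]

theorem Finset.Nonempty.of_modularityNumerator_pos {C : Finset V}
    (h : 0 < modularityNumerator G C) : C.Nonempty := by
  rw [nonempty_iff_ne_empty]
  rintro rfl
  simp [modularityNumerator_empty] at h

theorem edgeFinset_card_pos_of_CM_pos {C : Finset V} (h : 0 < CM G C) :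
    0 < G.edgeFinset.card := by
  by_contra! hm
  simp [CM, Nat.le_zero.1 hm] at h

theorem modularityNumerator_pos_of_CM_pos {C : Finset V} (h : 0 < CM G C) :
    0 < modularityNumerator G C := by
  have hm : (0 : ℝ) < 2 * G.edgeFinset.card := by
    have := edgeFinset_card_pos_of_CM_pos G h
    positivity
  rwa [CM_eq_div, div_pos_iff_of_pos_right hm] at h

theorem CM_le_CM_iff (hm : 0 < G.edgeFinset.card) {C D : Finset V} :
    CM G C ≤ CM G D ↔ modularityNumerator G C ≤ modularityNumerator G D := by
  simp only [CM_eq_div]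
  exact div_le_div_iff_of_pos_right (by positivity)

theorem DM_le_DM_of_subset {S T : Finset V} (hST : S ⊆ T) (hS : S.Nonempty)
    (hS₀ : 0 ≤ modularityNumerator G S) (hTS : modularityNumerator G T ≤ modularityNumerator G S) :
    DM G T ≤ DM G S := by
  have hS_card : (0 : ℝ) < S.card := by exact_mod_cast hS.card_pos
  rw [DM_eq_div, DM_eq_div]
  exact div_le_div₀ hS₀ hTS (by positivity) (by gcongr)

end

theorem cm_no_free_rider_implies_dm_no_free_rider_general
    {V : Type*} [Fintype V] [DecidableEq V]
    (G : SimpleGraph V) [DecidableRel G.Adj]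
    (S Sstar : Finset V)
    (hCM : 0 < CM G S)
    (h : CM G (S ∪ Sstar) ≤ CM G S) :
    DM G (S ∪ Sstar) ≤ DM G S := by
  have hm := edgeFinset_card_pos_of_CM_pos G hCM
  have hS := modularityNumerator_pos_of_CM_pos G hCM
  exact DM_le_DM_of_subset G subset_union_left (.of_modularityNumerator_pos G hS) hS.le
    ((CM_le_CM_iff G hm).1 h)

/-- If the classic modularity does not exhibit the free-rider effect
when merging `S` with `S*`, then neither does the density modularity. -/
theorem cm_no_free_rider_implies_dm_no_free_rider
    {V : Type*} [Fintype V] [DecidableEq V]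
    (G : SimpleGraph V) [DecidableRel G.Adj]
    (S Sstar : Finset V)
    (hm : 0 < G.edgeFinset.card)
    (hCM : 0 < CM G S)
    (h : CM G (S ∪ Sstar) ≤ CM G S) :
    DM G (S ∪ Sstar) ≤ DM G S :=
  cm_no_free_rider_implies_dm_no_free_rider_general G S Sstar hCM h
end

section
/- Let N ≥ 3 be a natural number and define the real function f₁(x) = (2x + N(N−1) − (N + N² + (N+2)x)² / (4N(2N+1))) / (1 + N + x). Then f₁ is strictly decreasing on [0, ∞): for all reals 0 ≤ x₁ < x₂, f₁(x₂) < f₁(x₁). (Equivalently, the polynomial (N² + 4N + 4)x² + (2N³ + 10N² + 16N + 8)x + 9N⁴ − 14N³ − 19N² − 4N is strictly positive for all x ≥ 0 when N ≥ 3, so the derivative of f₁ is negative there.) -/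
open Set

/-- With `g x = p + q x - r x²`, the cross-multiplied difference factors as
`g x₁ (c + x₂) - g x₂ (c + x₁) = (x₂ - x₁) (p - q c + r (c (x₁ + x₂) + x₁ x₂))`,
and each summand of the second factor is nonnegative on `[0, ∞)`. -/
lemma quadratic_div_strictAntiOn {p q r c : ℝ} (hc : 0 < c) (hr : 0 ≤ r) (hqp : q * c < p) :
    StrictAntiOn (fun x => (p + q * x - r * x ^ 2) / (c + x)) (Ici 0) := by
  intro x₁ hx₁ x₂ hx₂ hlt
  rw [mem_Ici] at hx₁ hx₂
  have hmargin : 0 < p - q * c + r * (c * (x₁ + x₂) + x₁ * x₂) := by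
    have : 0 ≤ r * (c * (x₁ + x₂) + x₁ * x₂) := by positivity
    linarith
  have hcross : (p + q * x₂ - r * x₂ ^ 2) * (c + x₁) < (p + q * x₁ - r * x₁ ^ 2) * (c + x₂) := by
    rw [← sub_pos]
    calc 0 < (x₂ - x₁) * (p - q * c + r * (c * (x₁ + x₂) + x₁ * x₂)) :=
          mul_pos (sub_pos.2 hlt) hmargin
      _ = _ := by ring
  exact (div_lt_div_iff₀ (by positivity) (by positivity)).2 hcross

/-- The Scenario-1 density modularity function `f₁` is strictly
decreasing on `[0, ∞)` when `N ≥ 3`. -/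
theorem scenario1_strictAntiOn (N : ℕ) (hN : 3 ≤ N) :
    ∀ x₁ x₂ : ℝ, 0 ≤ x₁ → x₁ < x₂ →
      (2 * x₂ + (N : ℝ) * ((N : ℝ) - 1) -
          ((N : ℝ) + (N : ℝ) ^ 2 + ((N : ℝ) + 2) * x₂) ^ 2 /
            (4 * (N : ℝ) * (2 * (N : ℝ) + 1))) /
        (1 + (N : ℝ) + x₂)
      < (2 * x₁ + (N : ℝ) * ((N : ℝ) - 1) -
            ((N : ℝ) + (N : ℝ) ^ 2 + ((N : ℝ) + 2) * x₁) ^ 2 /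
              (4 * (N : ℝ) * (2 * (N : ℝ) + 1))) /
          (1 + (N : ℝ) + x₁) := by
  intro x₁ x₂ hx₁ hlt
  have hn : (3 : ℝ) ≤ N := by exact_mod_cast hN
  set n : ℝ := (N : ℝ)
  set D : ℝ := 4 * n * (2 * n + 1)
  have hD : 0 < D := by positivity
  -- `D (p - q c)` is the constant term `9N⁴ - 14N³ - 19N² - 4N` of the paper's polynomial.
  have hqp : (2 - 2 * (n + n ^ 2) * (n + 2) / D) * (1 + n) < n * (n - 1) - (n + n ^ 2) ^ 2 / D := by
    have hcubic : 0 < 9 * n ^ 3 - 14 * n ^ 2 - 19 * n - 4 := by nlinarith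
    have hmargin : 0 < n * (9 * n ^ 3 - 14 * n ^ 2 - 19 * n - 4) := by positivity
    have hdiff : n * (n - 1) - (n + n ^ 2) ^ 2 / D - (2 - 2 * (n + n ^ 2) * (n + 2) / D) * (1 + n)
        = n * (9 * n ^ 3 - 14 * n ^ 2 - 19 * n - 4) / D := by
      field_simp
      ring
    linarith [div_pos hmargin hD]
  have hexpand : ∀ x : ℝ, 2 * x + n * (n - 1) - (n + n ^ 2 + (n + 2) * x) ^ 2 / D
      = n * (n - 1) - (n + n ^ 2) ^ 2 / D + (2 - 2 * (n + n ^ 2) * (n + 2) / D) * x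
        - (n + 2) ^ 2 / D * x ^ 2 := fun x => by ring
  rw [hexpand, hexpand]
  exact quadratic_div_strictAntiOn (by positivity) (by positivity) hqp
    (mem_Ici.2 hx₁) (mem_Ici.2 (hx₁.trans hlt.le)) hlt
end

section
/- Let N ≥ 3 be a natural number and define the real function f₂(x) = ((2 + N)x + N(N−1) − (N + N² + (2N+2)x)² / (4N(2N+1))) / (1 + N + x + Nx). Then f₂ is strictly decreasing on [0, ∞): for all reals 0 ≤ x₁ < x₂, f₂(x₂) < f₂(x₁). (Equivalently, the polynomial (4N² + 8N + 4)x² + (8N² + 16N + 8)x + 7N⁴ − 10N³ − 17N² − 4N is strictly positive for all x ≥ 0 when N ≥ 3, so the derivative of f₂ is negative there.) -/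
/-!
With `t = 1 + x` the denominator is `(N + 1) t` and `N + N² + (2N + 2) x = (N + 1) (2t + N - 2)`,
so `f₂` is a hyperbola `c - a t + b / t` with `a = (N + 1) / (N (2N + 1)) > 0` and
`b = (7N⁴ - 10N³ - 21N² - 12N - 4) / (4N (2N + 1) (N + 1))`, which is positive for `N ≥ 3`.
Both `-a t` and `b / t` decrease on `t > 0`.
-/

open Set

noncomputable def densityModularityTwo (n x : ℝ) : ℝ :=
  ((2 + n) * x + n * (n - 1) - (n + n ^ 2 + (2 * n + 2) * x) ^ 2 / (4 * n * (2 * n + 1))) /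
    (1 + n + x + n * x)

theorem strictAntiOn_sub_mul_add_div {a b c : ℝ} (ha : 0 < a) (hb : 0 ≤ b) :
    StrictAntiOn (fun t => c - a * t + b / t) (Ioi 0) := by
  intro t₁ ht₁ t₂ _ ht
  have hlin : a * t₁ < a * t₂ := mul_lt_mul_of_pos_left ht ha
  have hinv : b / t₂ ≤ b / t₁ := div_le_div_of_nonneg_left hb ht₁ ht.le
  linarith

theorem densityModularityTwo_eq {n x : ℝ} (hn : 0 < n) (hx : 0 < 1 + x) :
    densityModularityTwo n x =
      ((n + 2) / (n + 1) - (n + 1) * (n - 2) / (n * (2 * n + 1)))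
        - (n + 1) / (n * (2 * n + 1)) * (1 + x)
        + (7 * n ^ 4 - 10 * n ^ 3 - 21 * n ^ 2 - 12 * n - 4) /
            (4 * n * (2 * n + 1) * (n + 1)) / (1 + x) := by
  have hden : 1 + n + x + n * x = (n + 1) * (1 + x) := by ring
  unfold densityModularityTwo
  rw [hden]
  field_simp
  ring

theorem quartic_pos_of_three_le {n : ℝ} (hn : 3 ≤ n) : 0 < 7 * n ^ 4 - 10 * n ^ 3 - 21 * n ^ 2 - 12 * n - 4 := by
  nlinarith [pow_pos (by linarith : (0 : ℝ) < n) 3, mul_nonneg (sub_nonneg.2 hn) (sq_nonneg n)]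

/-- The Scenario-2 density modularity function `f₂` is strictly
decreasing on `[0, ∞)` when `N ≥ 3`. -/
theorem scenario2_strictAntiOn (N : ℕ) (hN : 3 ≤ N) :
    ∀ x₁ x₂ : ℝ, 0 ≤ x₁ → x₁ < x₂ →
      ((2 + (N : ℝ)) * x₂ + (N : ℝ) * ((N : ℝ) - 1) -
          ((N : ℝ) + (N : ℝ) ^ 2 + (2 * (N : ℝ) + 2) * x₂) ^ 2 /
            (4 * (N : ℝ) * (2 * (N : ℝ) + 1))) /
        (1 + (N : ℝ) + x₂ + (N : ℝ) * x₂)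
      < ((2 + (N : ℝ)) * x₁ + (N : ℝ) * ((N : ℝ) - 1) -
            ((N : ℝ) + (N : ℝ) ^ 2 + (2 * (N : ℝ) + 2) * x₁) ^ 2 /
              (4 * (N : ℝ) * (2 * (N : ℝ) + 1))) /
          (1 + (N : ℝ) + x₁ + (N : ℝ) * x₁) := by
  intro x₁ x₂ hx₁ hx₁₂
  change densityModularityTwo N x₂ < densityModularityTwo N x₁
  have hn : (3 : ℝ) ≤ N := by exact_mod_cast hN
  have hn₀ : (0 : ℝ) < N := by linarith
  have ht₁ : (0 : ℝ) < 1 + x₁ := by linarith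
  have ht₂ : (0 : ℝ) < 1 + x₂ := by linarith
  rw [densityModularityTwo_eq hn₀ ht₁, densityModularityTwo_eq hn₀ ht₂]
  exact strictAntiOn_sub_mul_add_div (by positivity) (div_nonneg (quartic_pos_of_three_le hn).le (by positivity))
    (mem_Ioi.2 ht₁) (mem_Ioi.2 ht₂) (by linarith)
end
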